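/- arXiv:2204.07611 — 2 statements merged into one kernel-verified Lean document; each statement's English description precedes it below -/
import Mathlib

section
/- For every p ∈ ℝ with p ≠ -n, the weighted L_p affine surface area is homogeneous of degree n(n-p)/(n+p) - k: for every a > 0, ω^p_{m,k,i⃗}(aK) = a^{n(n-p)/(n+p) - k} · ω^p_{m,k,i⃗}(K). -/
open MeasureTheory Real Filter Set
open scoped RealInnerProductSpace Topology NNReal ENNReal Pointwise

noncomputable section

/-- A convex body of class `C²₊` in `ℝⁿ`: a compact convex set with nonempty
interior, together with its boundary data: the outer unit normal `normal`
and the (everywhere strictly positive) principal curvatures `kappa` of the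
boundary. -/
structure C2PlusBody (n : ℕ) where
  carrier : Set (EuclideanSpace ℝ (Fin n))
  convex' : Convex ℝ carrier
  isCompact' : IsCompact carrier
  interior_nonempty' : (interior carrier).Nonempty
  /-- the outer unit normal at boundary points -/
  normal : EuclideanSpace ℝ (Fin n) → EuclideanSpace ℝ (Fin n)
  normal_norm : ∀ x ∈ frontier carrier, ‖normal x‖ = 1
  normal_outer : ∀ x ∈ frontier carrier, ∀ y ∈ carrier, ⟪y - x, normal x⟫ ≤ 0
  /-- the principal curvatures of the boundary -/
  kappa : Fin (n - 1) → EuclideanSpace ℝ (Fin n) → ℝ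
  kappa_pos : ∀ j, ∀ x ∈ frontier carrier, 0 < kappa j x

namespace C2PlusBody

variable {n : ℕ}

/-- The support `⟨x, N(x)⟩` at a boundary point. -/
def supp (K : C2PlusBody n) (x : EuclideanSpace ℝ (Fin n)) : ℝ := ⟪x, K.normal x⟫

/-- `H j`, the `j`-th normalized elementary symmetric function of the
principal curvatures; `H 0 = 1` and `H (n-1)` is the Gauss curvature. -/
def H (K : C2PlusBody n) (j : ℕ) (x : EuclideanSpace ℝ (Fin n)) : ℝ :=
  ((n - 1).choose j : ℝ)⁻¹ *
    ∑ S ∈ Finset.powersetCard j (Finset.univ : Finset (Fin (n - 1))),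
      ∏ l ∈ S, K.kappa l x

/-- `K` has centroid at the origin. -/
def CentroidZero (K : C2PlusBody n) : Prop :=
  ∫ x in K.carrier, x = (0 : EuclideanSpace ℝ (Fin n))

end C2PlusBody

/-- `c(n) = ∏_{j=1}^{n-1} C(n-1, j)^{i_j}`. -/
def cW (n : ℕ) (i : ℕ → ℕ) : ℝ :=
  ∏ j ∈ Finset.Icc 1 (n - 1), ((n - 1).choose j : ℝ) ^ i j

namespace C2PlusBody

variable {n : ℕ}

/-- The density of the measure `μ_{i⃗} = μ_{m,k,i⃗}` with respect to the surface
measure `ℋ^{n-1}` on `∂K`. -/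
def dens (K : C2PlusBody n) (m : ℕ) (k : ℝ) (i : ℕ → ℕ)
    (x : EuclideanSpace ℝ (Fin n)) : ℝ :=
  cW n i * K.supp x ^ ((m : ℝ) - k) * ∏ j ∈ Finset.Icc 1 (n - 1), K.H j x ^ i j

/-- The weighted `L_p` affine surface area
`ω^p_{m,k,i⃗}(K) = ∫_{∂K} H_{n-1}^{p/(n+p)} ⟨x,N(x)⟩^{-n(p-1)/(n+p)} dμ_{i⃗}`. -/
def omega (K : C2PlusBody n) (m : ℕ) (k : ℝ) (i : ℕ → ℕ) (p : ℝ) : ℝ :=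
  ∫ x in frontier K.carrier,
    K.H (n - 1) x ^ (p / ((n : ℝ) + p)) *
      K.supp x ^ (-((n : ℝ) * (p - 1)) / ((n : ℝ) + p)) *
      K.dens m k i x ∂μH[(n : ℝ) - 1]

end C2PlusBody

/-- `K` is an ellipsoid: an affine image of the Euclidean unit ball. -/
def IsEllipsoid {n : ℕ} (K : Set (EuclideanSpace ℝ (Fin n))) : Prop :=
  ∃ T : EuclideanSpace ℝ (Fin n) ≃ᵃ[ℝ] EuclideanSpace ℝ (Fin n),
    K = T '' Metric.closedBall 0 1
/-!
Dilating `K` by `a` multiplies `⟨x, N(x)⟩` by `a` and divides every principal curvature by `a`,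
hence `H_j` by `a ^ j`. Because `∑ j i_j = m`, the weight `∏ H_j ^ {i_j}` scales by `a ^ (-m)`,
which cancels against `⟨x, N(x)⟩ ^ (m - k)` and leaves `a ^ (-k)`. So the integrand of `ω^p` on
`∂(aK)` at `a • x` is a fixed power of `a` times that of `K` at `x`, and the change of variables
`x ↦ a • x` contributes the factor `a ^ (n - 1)` of `(n-1)`-dimensional Hausdorff measure.
-/

namespace Real

/-- For negative `s`, `s ^ y = exp (log s * y) * cos (y * π)` is still multiplicative against a
positive factor. -/
lemma mul_rpow_of_pos_left {a : ℝ} (ha : 0 < a) (s y : ℝ) : (a * s) ^ y = a ^ y * s ^ y := by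
  rcases lt_trichotomy s 0 with hs | rfl | hs
  · rw [rpow_def_of_neg (mul_neg_of_pos_of_neg ha hs), rpow_def_of_neg hs,
      log_mul ha.ne' hs.ne, rpow_def_of_pos ha, add_mul, exp_add]
    ring
  · rcases eq_or_ne y 0 with rfl | hy
    · simp
    · simp [zero_rpow hy]
  · exact mul_rpow ha.le hs.le

end Real

theorem frontier_smul₀ {G₀ α : Type*} [GroupWithZero G₀] [MulAction G₀ α] [TopologicalSpace α]
    [ContinuousConstSMul G₀ α] {c : G₀} (hc : c ≠ 0) (s : Set α) :
    frontier (c • s) = c • frontier s :=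
  ((Homeomorph.smulOfNeZero c hc).image_frontier s).symm

section Dilation

variable {𝕜 E F : Type*} [NormedDivisionRing 𝕜] [NormedAddCommGroup E] [Module 𝕜 E]
  [NormSMulClass 𝕜 E] [MeasurableSpace E] [BorelSpace E]
  [NormedAddCommGroup F] [NormedSpace ℝ F]

theorem map_smul_hausdorffMeasure {d : ℝ} (hd : 0 ≤ d) {c : 𝕜} (hc : c ≠ 0) :
    Measure.map (c • ·) (μH[d] : Measure E) = ‖c⁻¹‖₊ ^ d • μH[d] := by
  ext s hs
  rw [Measure.map_apply (continuous_const_smul c).measurable hs, Set.preimage_smul₀ hc,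
    Measure.hausdorffMeasure_smul₀ hd (inv_ne_zero hc)]
  rfl

theorem setIntegral_smul_set_hausdorffMeasure {d : ℝ} (hd : 0 ≤ d) {c : 𝕜} (hc : c ≠ 0)
    (s : Set E) (f : E → F) :
    ∫ y in c • s, f y ∂μH[d] = ‖c‖ ^ d • ∫ x in s, f (c • x) ∂μH[d] := by
  have hinv : ‖c‖ ^ d * ‖c⁻¹‖ ^ d = 1 := by
    rw [← Real.mul_rpow (norm_nonneg _) (norm_nonneg _), ← norm_mul, mul_inv_cancel₀ hc,
      norm_one, Real.one_rpow]
  calc ∫ y in c • s, f y ∂μH[d]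
      = ‖c‖ ^ d • ‖c⁻¹‖ ^ d • ∫ y in c • s, f y ∂μH[d] := by rw [smul_smul, hinv, one_smul]
    _ = ‖c‖ ^ d • ∫ y in c • s, f y ∂Measure.map (c • ·) μH[d] := by
      rw [map_smul_hausdorffMeasure hd hc, Measure.restrict_smul, integral_smul_nnreal_measure,
        NNReal.smul_def, NNReal.coe_rpow, coe_nnnorm]
    _ = ‖c‖ ^ d • ∫ x in s, f (c • x) ∂μH[d] := by
      rw [(measurableEmbedding_const_smul₀ hc).setIntegral_map, Set.preimage_smul₀ hc,
        inv_smul_smul₀ hc]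

end Dilation

namespace C2PlusBody

variable {n : ℕ} {K L : C2PlusBody n} {x y : EuclideanSpace ℝ (Fin n)} {a : ℝ}

def omegaIntegrand (K : C2PlusBody n) (m : ℕ) (k : ℝ) (i : ℕ → ℕ) (p : ℝ)
    (x : EuclideanSpace ℝ (Fin n)) : ℝ :=
  K.H (n - 1) x ^ (p / ((n : ℝ) + p)) *
    K.supp x ^ (-((n : ℝ) * (p - 1)) / ((n : ℝ) + p)) * K.dens m k i x

lemma omega_eq_integral (K : C2PlusBody n) (m : ℕ) (k : ℝ) (i : ℕ → ℕ) (p : ℝ) :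
    K.omega m k i p = ∫ x in frontier K.carrier, K.omegaIntegrand m k i p x ∂μH[(n : ℝ) - 1] :=
  rfl

lemma supp_smul_of_normal_eq (h : L.normal (a • x) = K.normal x) :
    L.supp (a • x) = a * K.supp x := by
  rw [supp, supp, h, real_inner_smul_left]

lemma H_eq_div_pow_of_kappa_eq (h : ∀ l, L.kappa l y = K.kappa l x / a) (j : ℕ) :
    L.H j y = K.H j x / a ^ j := by
  rw [H, H, mul_div_assoc, Finset.sum_div]
  congr 1
  refine Finset.sum_congr rfl fun S hS => ?_
  rw [Finset.prod_congr rfl fun l _ => h l, Finset.prod_div_distrib, Finset.prod_const,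
    (Finset.mem_powersetCard.mp hS).2]

lemma dens_eq_rpow_mul_of_scaling {m : ℕ} {i : ℕ → ℕ}
    (hi : ∑ j ∈ Finset.Icc 1 (n - 1), j * i j = m) (ha : 0 < a) (k : ℝ)
    (hs : L.supp y = a * K.supp x) (hκ : ∀ l, L.kappa l y = K.kappa l x / a) :
    L.dens m k i y = a ^ (-k) * K.dens m k i x := by
  have hprod : ∏ j ∈ Finset.Icc 1 (n - 1), L.H j y ^ i j
      = (∏ j ∈ Finset.Icc 1 (n - 1), K.H j x ^ i j) / a ^ m := by
    simp_rw [H_eq_div_pow_of_kappa_eq hκ, div_pow, ← pow_mul]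
    rw [Finset.prod_div_distrib, Finset.prod_pow_eq_pow_sum, hi]
  have hpow : a ^ ((m : ℝ) - k) = a ^ (-k) * a ^ m := by
    rw [← rpow_natCast, ← rpow_add ha, sub_eq_neg_add]
  rw [dens, dens, hprod, hs, mul_rpow_of_pos_left ha, hpow]
  field_simp

lemma omegaIntegrand_eq_rpow_mul_of_scaling {m : ℕ} {i : ℕ → ℕ}
    (hi : ∑ j ∈ Finset.Icc 1 (n - 1), j * i j = m) (ha : 0 < a) (k p : ℝ)
    (hs : L.supp y = a * K.supp x) (hκ : ∀ l, L.kappa l y = K.kappa l x / a) :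
    L.omegaIntegrand m k i p y
      = a ^ (-((n - 1 : ℕ) : ℝ) * (p / ((n : ℝ) + p)) - (n : ℝ) * (p - 1) / ((n : ℝ) + p) - k)
        * K.omegaIntegrand m k i p x := by
  have hH : L.H (n - 1) y = a ^ (-((n - 1 : ℕ) : ℝ)) * K.H (n - 1) x := by
    rw [H_eq_div_pow_of_kappa_eq hκ, rpow_neg ha.le, rpow_natCast, div_eq_inv_mul]
  rw [omegaIntegrand, omegaIntegrand, hH, hs, dens_eq_rpow_mul_of_scaling hi ha k hs hκ,
    mul_rpow_of_pos_left (rpow_pos_of_pos ha _), mul_rpow_of_pos_left ha, ← rpow_mul ha.le,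
    sub_sub, rpow_sub ha, rpow_add ha, neg_div, rpow_neg ha.le, rpow_neg ha.le]
  ring

end C2PlusBody

theorem weighted_Lp_affine_surface_area_homogeneous_general
    {n : ℕ} (hn : 2 ≤ n) (m k : ℕ) (i : ℕ → ℕ)
    (hi : ∑ j ∈ Finset.Icc 1 (n - 1), j * i j = m)
    (p : ℝ) (hp : p ≠ -(n : ℝ))
    (K aK : C2PlusBody n)
    (a : ℝ) (ha : 0 < a)
    (hcar : aK.carrier = a • K.carrier)
    (hdata : ∀ x ∈ frontier K.carrier,
      aK.normal (a • x) = K.normal x ∧ ∀ j, aK.kappa j (a • x) = K.kappa j x / a) :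
    aK.omega m k i p
      = a ^ ((n : ℝ) * ((n : ℝ) - p) / ((n : ℝ) + p) - (k : ℝ)) * K.omega m k i p := by
  have hn1 : ((n - 1 : ℕ) : ℝ) = (n : ℝ) - 1 := by
    rw [Nat.cast_sub (by omega), Nat.cast_one]
  have hd : (0 : ℝ) ≤ (n : ℝ) - 1 := by
    rw [← hn1]
    positivity
  have hnp : (n : ℝ) + p ≠ 0 := fun h => hp (by linarith)
  have hpt : ∀ x ∈ frontier K.carrier, aK.omegaIntegrand m k i p (a • x)
      = a ^ (-((n - 1 : ℕ) : ℝ) * (p / ((n : ℝ) + p)) - (n : ℝ) * (p - 1) / ((n : ℝ) + p) - k)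
        * K.omegaIntegrand m k i p x := fun x hx =>
    C2PlusBody.omegaIntegrand_eq_rpow_mul_of_scaling hi ha k p
      (C2PlusBody.supp_smul_of_normal_eq (hdata x hx).1) (hdata x hx).2
  rw [C2PlusBody.omega_eq_integral, C2PlusBody.omega_eq_integral, hcar, frontier_smul₀ ha.ne',
    setIntegral_smul_set_hausdorffMeasure hd ha.ne', norm_of_nonneg ha.le,
    setIntegral_congr_fun isClosed_frontier.measurableSet hpt, integral_const_mul, smul_eq_mul,
    ← mul_assoc, ← rpow_add ha, hn1]
  congr 2
  field_simp
  ring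

/-- For every `p ≠ -n`, the weighted `L_p` affine surface area is
homogeneous of degree `n(n-p)/(n+p) - k`: for every `a > 0`,
`ω^p_{m,k,i⃗}(aK) = a^{n(n-p)/(n+p) - k} ⬝ ω^p_{m,k,i⃗}(K)`.
Here `aK` denotes the dilate of `K` by `a`, whose boundary data is, as it must be,
`N_{aK}(ax) = N_K(x)` and `κ_j^{aK}(ax) = κ_j^K(x)/a`. -/
theorem weighted_Lp_affine_surface_area_homogeneous
    {n : ℕ} (hn : 2 ≤ n) (m k : ℕ) (i : ℕ → ℕ)
    (hi : ∑ j ∈ Finset.Icc 1 (n - 1), j * i j = m)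
    (p : ℝ) (hp : p ≠ -(n : ℝ))
    (K aK : C2PlusBody n) (hc : K.CentroidZero)
    (a : ℝ) (ha : 0 < a)
    (hcar : aK.carrier = a • K.carrier)
    (hdata : ∀ x ∈ frontier K.carrier,
      aK.normal (a • x) = K.normal x ∧ ∀ j, aK.kappa j (a • x) = K.kappa j x / a) :
    aK.omega m k i p
      = a ^ ((n : ℝ) * ((n : ℝ) - p) / ((n : ℝ) + p) - (k : ℝ)) * K.omega m k i p :=
  weighted_Lp_affine_surface_area_homogeneous_general hn m k i hi p hp K aK a ha hcar hdata
end
end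

section
/- For the convex function f(t) = t^{p/(n+p)} with p > 0 (respectively concave for the appropriate ranges of p), the f-divergence of K with respect to μ_{i⃗} equals the weighted L_p affine surface area: D_f(P_K, Q_K) = ∫_{∂K} (H_{n-1}(x)/⟨x,N(x)⟩^{n+1})^{p/(n+p)} ⟨x,N(x)⟩ dμ_{i⃗}(x) = ω^p_{m,k,i⃗}(K). -/
open MeasureTheory Real Filter Set
open scoped RealInnerProductSpace Topology NNReal ENNReal Pointwise

noncomputable section

/-- The `f`-divergence of `K` with respect to the measure `μ_{i⃗}`:
`D_f(P_K, Q_K) = ∫_{∂K} f(H_{n-1}(x)/⟨x,N(x)⟩^{n+1}) ⟨x,N(x)⟩ dμ_{i⃗}(x)`. -/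
def C2PlusBody.Df {n : ℕ} (K : C2PlusBody n) (m : ℕ) (k : ℝ) (i : ℕ → ℕ)
    (f : ℝ → ℝ) : ℝ :=
  ∫ x in frontier K.carrier,
    f (K.H (n - 1) x / K.supp x ^ (n + 1)) * K.supp x * K.dens m k i x ∂μH[(n : ℝ) - 1]

/-- The weighted volume `μ_{i⃗}-vol_n(K) = (1/n) ∫_{∂K} ⟨x,N(x)⟩ dμ_{i⃗}(x)`. -/
def C2PlusBody.wvol {n : ℕ} (K : C2PlusBody n) (m : ℕ) (k : ℝ) (i : ℕ → ℕ) : ℝ :=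
  (1 / (n : ℝ)) *
    ∫ x in frontier K.carrier, K.supp x * K.dens m k i x ∂μH[(n : ℝ) - 1]

/-- The weighted volume of the polar body,
`μ_{i⃗}-vol_n(K°) = (1/n) ∫_{∂K} H_{n-1}(x) ⟨x,N(x)⟩^{-n} dμ_{i⃗}(x)`. -/
def C2PlusBody.wvolPolar {n : ℕ} (K : C2PlusBody n) (m : ℕ) (k : ℝ) (i : ℕ → ℕ) : ℝ :=
  (1 / (n : ℝ)) *
    ∫ x in frontier K.carrier,
      K.H (n - 1) x / K.supp x ^ n * K.dens m k i x ∂μH[(n : ℝ) - 1]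


private theorem centroid_zero_mem_interior' {n : ℕ} (K : Set (EuclideanSpace ℝ (Fin n)))
    (hc : Convex ℝ K) (hK : IsCompact K) (hi : (interior K).Nonempty)
    (h0 : ∫ x in K, x = (0 : EuclideanSpace ℝ (Fin n))) :
    (0:EuclideanSpace ℝ (Fin n)) ∈ interior K := by
  by_contra h
  obtain ⟨f, hf⟩ := geometric_hahn_banach_open_point (hc.interior) isOpen_interior h
  have hfi : ∀ a ∈ interior K, f a < 0 := by simpa using hf
  have hKcl : K ⊆ closure (interior K) := by
    intro x hx
    obtain ⟨y, hy⟩ := hi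
    have htend : Tendsto (fun t : ℝ => x + t • (y - x)) (𝓝[>] 0) (𝓝 x) := by
      have : Tendsto (fun t : ℝ => x + t • (y - x)) (𝓝 0) (𝓝 (x + (0:ℝ) • (y - x))) := by
        exact ((continuous_const.add ((continuous_id.smul continuous_const))).tendsto 0)
      simpa using this.mono_left nhdsWithin_le_nhds
    refine mem_closure_of_tendsto htend ?_
    have hIoc : Ioc (0:ℝ) 1 ∈ 𝓝[>] (0:ℝ) := Ioc_mem_nhdsGT_of_mem (by simp)
    filter_upwards [hIoc] with t ht
    exact hc.add_smul_sub_mem_interior hx hy ht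
  have hfK : ∀ a ∈ K, f a ≤ 0 := by
    intro a ha
    have hcl : IsClosed {x : EuclideanSpace ℝ (Fin n) | f x ≤ 0} :=
      isClosed_le f.continuous continuous_const
    exact hcl.closure_subset_iff.2 (fun x hx => (hfi x hx).le) (hKcl ha)
  have hmeas : MeasurableSet K := hK.measurableSet
  have hint : IntegrableOn (fun x : EuclideanSpace ℝ (Fin n) => x) K volume :=
    ContinuousOn.integrableOn_compact hK continuousOn_id
  have hintf : ∫ x in K, f x = 0 := by
    rw [f.integral_comp_comm hint, h0, map_zero]
  have hae : ∀ᵐ x ∂(volume.restrict K), f x = 0 := by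
    have hnn : 0 ≤ᵐ[volume.restrict K] fun x => -f x := by
      filter_upwards [ae_restrict_mem hmeas] with x hx
      simpa using hfK x hx
    have hz : ∫ x in K, -f x = 0 := by rw [integral_neg, hintf, neg_zero]
    have hintf2 : IntegrableOn (fun x => -f x) K volume :=
      (f.continuous.neg).continuousOn.integrableOn_compact hK
    have := (integral_eq_zero_iff_of_nonneg_ae hnn hintf2).1 hz
    filter_upwards [this] with x hx
    simpa using hx
  have h1 : volume.restrict K {x | f x ≠ 0} = 0 := by
    rw [ae_iff] at hae; simpa using hae
  have h2 : volume.restrict K (interior K) = 0 :=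
    measure_mono_null (fun x hx => (hfi x hx).ne) h1
  rw [Measure.restrict_apply' hmeas, inter_eq_left.2 interior_subset] at h2
  exact (isOpen_interior.measure_pos volume hi).ne' h2

private theorem supp_pos_of_centroid_zero {n : ℕ} (K : C2PlusBody n) (hc : K.CentroidZero)
    {x : EuclideanSpace ℝ (Fin n)} (hx : x ∈ frontier K.carrier) : 0 < K.supp x := by
  have h0 : (0:EuclideanSpace ℝ (Fin n)) ∈ interior K.carrier :=
    centroid_zero_mem_interior' K.carrier K.convex' K.isCompact' K.interior_nonempty' hc
  obtain ⟨ε, hε, hball⟩ := Metric.isOpen_iff.1 isOpen_interior 0 h0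
  set N := K.normal x with hN
  have hNnorm : ‖N‖ = 1 := K.normal_norm x hx
  have hyK : (ε/2) • N ∈ K.carrier := by
    apply interior_subset
    apply hball
    simp only [Metric.mem_ball, dist_zero_right, norm_smul, hNnorm, mul_one,
      Real.norm_eq_abs, abs_of_pos (by linarith : (0:ℝ) < ε/2)]
    linarith
  have hout := K.normal_outer x hx _ hyK
  rw [inner_sub_left] at hout
  have hsm : ⟪(ε/2) • N, N⟫ = ε/2 := by
    rw [real_inner_smul_left, real_inner_self_eq_norm_sq, hNnorm]
    ring
  rw [hsm] at hout
  have : ε/2 ≤ K.supp x := hout |> sub_nonpos.1 |>.trans_eq rfl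
  linarith

private theorem gauss_pos {n : ℕ} (K : C2PlusBody n)
    {x : EuclideanSpace ℝ (Fin n)} (hx : x ∈ frontier K.carrier) : 0 < K.H (n-1) x := by
  unfold C2PlusBody.H
  have hcard : (Finset.univ : Finset (Fin (n - 1))).card = n - 1 := by simp
  have hps : Finset.powersetCard (n-1) (Finset.univ : Finset (Fin (n-1)))
      = {Finset.univ} := by
    have h := Finset.powersetCard_self (Finset.univ : Finset (Fin (n-1)))
    rwa [hcard] at h
  rw [hps, Nat.choose_self]
  simp only [Nat.cast_one, inv_one, one_mul, Finset.sum_singleton]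
  exact Finset.prod_pos fun j _ => K.kappa_pos j x hx

/-- For the function `f(t) = t^{p/(n+p)}` with `p > 0`, the
`f`-divergence of `K` with respect to `μ_{i⃗}` equals the weighted `L_p` affine
surface area:
`D_f(P_K, Q_K) = ∫_{∂K} (H_{n-1}(x)/⟨x,N(x)⟩^{n+1})^{p/(n+p)} ⟨x,N(x)⟩ dμ_{i⃗}(x) = ω^p_{m,k,i⃗}(K)`. -/
theorem f_divergence_eq_weighted_Lp_affine_surface_area
    {n : ℕ} (hn : 2 ≤ n) (m k : ℕ) (i : ℕ → ℕ)
    (hi : ∑ j ∈ Finset.Icc 1 (n - 1), j * i j = m)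
    (K : C2PlusBody n) (hc : K.CentroidZero)
    (p : ℝ) (hp : 0 < p) :
    K.Df m k i (fun t => t ^ (p / ((n : ℝ) + p)))
        = ∫ x in frontier K.carrier,
            (K.H (n - 1) x / K.supp x ^ (n + 1)) ^ (p / ((n : ℝ) + p)) * K.supp x *
              K.dens m k i x ∂μH[(n : ℝ) - 1]
      ∧ (∫ x in frontier K.carrier,
            (K.H (n - 1) x / K.supp x ^ (n + 1)) ^ (p / ((n : ℝ) + p)) * K.supp x *
              K.dens m k i x ∂μH[(n : ℝ) - 1])
          = K.omega m k i p := by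
  constructor
  · rfl
  · unfold C2PlusBody.omega
    apply MeasureTheory.setIntegral_congr_fun isClosed_frontier.measurableSet
    intro x hx
    have hs : 0 < K.supp x := supp_pos_of_centroid_zero K hc hx
    have hH : 0 < K.H (n-1) x := gauss_pos K hx
    have hnp : (0:ℝ) < (n:ℝ) + p := by positivity
    have hsn : (0:ℝ) ≤ K.supp x ^ (n+1) := by positivity
    simp only []
    rw [Real.div_rpow hH.le hsn]
    have h1 : (K.supp x ^ (n+1) : ℝ) = K.supp x ^ ((n+1 : ℕ) : ℝ) :=
      (Real.rpow_natCast _ (n+1)).symm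
    rw [h1, ← Real.rpow_mul hs.le]
    have h2 : -((n : ℝ) * (p - 1)) / ((n : ℝ) + p)
        = 1 - ((n+1 : ℕ) : ℝ) * (p / ((n:ℝ) + p)) := by
      push_cast
      field_simp
      ring
    rw [h2, Real.rpow_sub hs, Real.rpow_one]
    have hpow : K.supp x ^ (((n:ℝ)+1) * (p / ((n:ℝ) + p))) ≠ 0 := by
      positivity
    push_cast at hpow ⊢
    field_simp
end
end
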